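/- Let T be a global run of an L-DPN that uses locks in a nested style, and let v be a node of T that has both a right child (arising from a transition rule) and a left child (the local initial configuration of a spawned instance). Let as¹ and as² be the acquisition structures of the subtrees of T rooted at the right child and at the left child, respectively. Then as¹ and as² are consistent and Compatible(as¹,as²) holds. -/

import Mathlib

/-!
Common formalization infrastructure for
"Single-indexed LTL model checking for Dynamic Pushdown Networks with locks".
-/

namespace DPNFormal

/-- Actions of an L-DPN: internal action, lock acquisition, lock release. -/
inductive Act (L : Type) : Type
  | tau : Act L
  | acq : L → Act L
  | rel : L → Act L

/-- Transition rules of a DPDS: `simple a p γ p' w` is `pγ ↪ᵃ p'w`,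
`spawn a p γ p' w p₂ w₂` is `pγ ↪ᵃ p'w ▷ p₂w₂`. -/
inductive Rule (P Γ L : Type) : Type
  | simple (a : Act L) (p : P) (γ : Γ) (p' : P) (w : List Γ) : Rule P Γ L
  | spawn (a : Act L) (p : P) (γ : Γ) (p' : P) (w : List Γ) (p₂ : P) (w₂ : List Γ) : Rule P Γ L

/-- A local configuration: control state, stack content, set of held locks. -/
abbrev Conf (P Γ L : Type) := P × List Γ × Set L

/-- A Dynamic Pushdown Network with Locks (L-DPN): `n` DPDSs, each with its
set of control states, its stack alphabet and its set of rules.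
A (lock-free) DPN is the special case `L = Empty` (so all actions are `τ`). -/
structure LDPN (n : ℕ) (P Γ L : Type) where
  states : Fin n → Set P
  alph : Fin n → Set Γ
  rules : Fin n → Set (Rule P Γ L)

/-- Well-formedness of a rule of the `i`-th DPDS: the control locations belong to
`Pᵢ`, the stack symbols to `Γᵢ`, and a spawned configuration belongs to some `Pⱼ × Γⱼ*`. -/
def RuleOk {n P Γ L} (M : LDPN n P Γ L) (i : Fin n) : Rule P Γ L → Prop
  | .simple _ p γ p' w => p ∈ M.states i ∧ p' ∈ M.states i ∧ γ ∈ M.alph i ∧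
      ∀ x ∈ w, x ∈ M.alph i
  | .spawn _ p γ p' w p₂ w₂ => p ∈ M.states i ∧ p' ∈ M.states i ∧ γ ∈ M.alph i ∧
      (∀ x ∈ w, x ∈ M.alph i) ∧ ∃ j, p₂ ∈ M.states j ∧ ∀ x ∈ w₂, x ∈ M.alph j

/-- Well-formedness of an L-DPN: all components are finite, the control-state sets
are pairwise disjoint, and all rules are well-formed. -/
structure LDPN.WF {n P Γ L} (M : LDPN n P Γ L) : Prop where
  states_fin : ∀ i, (M.states i).Finite
  alph_fin : ∀ i, (M.alph i).Finite
  rules_fin : ∀ i, (M.rules i).Finite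
  disj : ∀ i j, i ≠ j → Disjoint (M.states i) (M.states j)
  rules_ok : ∀ i, ∀ ru ∈ M.rules i, RuleOk M i ru

/-- The set `D_I` of Dynamically Created Local Initial Configurations (DCLICs). -/
def LDPN.DCLICs {n P Γ L} (M : LDPN n P Γ L) : Set (Conf P Γ L) :=
  {c | ∃ i a p γ p' w p₂ w₂, Rule.spawn a p γ p' w p₂ w₂ ∈ M.rules i ∧
        c = (p₂, w₂, (∅ : Set L))}

/-! ### Global runs as (growing) binary trees -/

/-- Finite binary trees whose nodes are labelled by local configurations;
a node has either no child (a leaf), only a right child, or both children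
(left child = newly spawned instance). -/
inductive GTree (C : Type) : Type
  | leaf (c : C) : GTree C
  | node1 (c : C) (right : GTree C) : GTree C
  | node2 (c : C) (left : GTree C) (right : GTree C) : GTree C

/-- The multiset of leaves of a tree: the current global configuration. -/
def GTree.leaves {C} : GTree C → Multiset C
  | .leaf c => {c}
  | .node1 _ t => t.leaves
  | .node2 _ tl tr => tl.leaves + tr.leaves

/-- The label of the root. -/
def GTree.rootLabel {C} : GTree C → C
  | .leaf c => c
  | .node1 c _ => c
  | .node2 c _ _ => c

/-- The label of the node at a given position (positions are lists of directions
from the root; `true` = right child, `false` = left child). -/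
def GTree.label? {C} : GTree C → List Bool → Option C
  | t, [] => some t.rootLabel
  | .leaf _, _ :: _ => none
  | .node1 _ t, true :: pos => t.label? pos
  | .node1 _ _, false :: _ => none
  | .node2 _ _ tr, true :: pos => tr.label? pos
  | .node2 _ tl _, false :: pos => tl.label? pos

/-- A lock `l` is free in the tree `t` if no current instance holds it. -/
def freeIn {P Γ L} (t : GTree (Conf P Γ L)) (l : L) : Prop :=
  ∀ c ∈ t.leaves, l ∉ c.2.2

/-- One expansion step of a global run: exactly one leaf of the tree gets its
children, according to a transition rule of `M`; `freeL` is the availability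
predicate for lock acquisitions, `pos` records the position of the expanded leaf
and `a` the action of the rule used. -/
inductive ExpandA {n P Γ L} (M : LDPN n P Γ L) (freeL : L → Prop) :
    GTree (Conf P Γ L) → GTree (Conf P Γ L) → List Bool → Act L → Prop
  | simple_tau {i : Fin n} {p p' : P} {γ : Γ} {w u : List Γ} {Lk : Set L} :
      Rule.simple Act.tau p γ p' w ∈ M.rules i →
      ExpandA M freeL (.leaf (p, γ :: u, Lk))
        (.node1 (p, γ :: u, Lk) (.leaf (p', w ++ u, Lk))) [] Act.tau
  | simple_acq {i : Fin n} {p p' : P} {γ : Γ} {w u : List Γ} {Lk : Set L} {l : L} :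
      Rule.simple (Act.acq l) p γ p' w ∈ M.rules i → freeL l →
      ExpandA M freeL (.leaf (p, γ :: u, Lk))
        (.node1 (p, γ :: u, Lk) (.leaf (p', w ++ u, Lk ∪ {l}))) [] (Act.acq l)
  | simple_rel {i : Fin n} {p p' : P} {γ : Γ} {w u : List Γ} {Lk : Set L} {l : L} :
      Rule.simple (Act.rel l) p γ p' w ∈ M.rules i → l ∈ Lk →
      ExpandA M freeL (.leaf (p, γ :: u, Lk))
        (.node1 (p, γ :: u, Lk) (.leaf (p', w ++ u, Lk \ {l}))) [] (Act.rel l)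
  | spawn_tau {i : Fin n} {p p' p₂ : P} {γ : Γ} {w u w₂ : List Γ} {Lk : Set L} :
      Rule.spawn Act.tau p γ p' w p₂ w₂ ∈ M.rules i →
      ExpandA M freeL (.leaf (p, γ :: u, Lk))
        (.node2 (p, γ :: u, Lk) (.leaf (p₂, w₂, (∅ : Set L)))
          (.leaf (p', w ++ u, Lk))) [] Act.tau
  | spawn_acq {i : Fin n} {p p' p₂ : P} {γ : Γ} {w u w₂ : List Γ} {Lk : Set L} {l : L} :
      Rule.spawn (Act.acq l) p γ p' w p₂ w₂ ∈ M.rules i → freeL l →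
      ExpandA M freeL (.leaf (p, γ :: u, Lk))
        (.node2 (p, γ :: u, Lk) (.leaf (p₂, w₂, (∅ : Set L)))
          (.leaf (p', w ++ u, Lk ∪ {l}))) [] (Act.acq l)
  | spawn_rel {i : Fin n} {p p' p₂ : P} {γ : Γ} {w u w₂ : List Γ} {Lk : Set L} {l : L} :
      Rule.spawn (Act.rel l) p γ p' w p₂ w₂ ∈ M.rules i → l ∈ Lk →
      ExpandA M freeL (.leaf (p, γ :: u, Lk))
        (.node2 (p, γ :: u, Lk) (.leaf (p₂, w₂, (∅ : Set L)))
          (.leaf (p', w ++ u, Lk \ {l}))) [] (Act.rel l)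
  | in_node1 {c t t' pos a} :
      ExpandA M freeL t t' pos a →
      ExpandA M freeL (.node1 c t) (.node1 c t') (true :: pos) a
  | in_node2_left {c tl tl' tr pos a} :
      ExpandA M freeL tl tl' pos a →
      ExpandA M freeL (.node2 c tl tr) (.node2 c tl' tr) (false :: pos) a
  | in_node2_right {c tl tr tr' pos a} :
      ExpandA M freeL tr tr' pos a →
      ExpandA M freeL (.node2 c tl tr) (.node2 c tl tr') (true :: pos) a

/-- A global run of `M` from the initial global configuration `{c₀}`:
an increasing sequence of finite trees, starting with the single root `c₀`,
where at each instant the tree either stays unchanged or one leaf is expanded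
(a lock may be acquired only if it is free in the whole current tree). -/
structure GlobalRun {n P Γ L} (M : LDPN n P Γ L) (c₀ : Conf P Γ L) where
  tr : ℕ → GTree (Conf P Γ L)
  init : tr 0 = .leaf c₀
  step : ∀ k, tr (k + 1) = tr k ∨
    ∃ pos a, ExpandA M (freeIn (tr k)) (tr k) (tr (k + 1)) pos a

/-- The event at time `k` of a global run: the leaf at position `pos` is expanded
using a rule with action `a` when passing from `tr k` to `tr (k+1)`. -/
def EventAt {n P Γ L} {M : LDPN n P Γ L} {c₀ : Conf P Γ L} (r : GlobalRun M c₀)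
    (k : ℕ) (pos : List Bool) (a : Act L) : Prop :=
  ExpandA M (freeIn (r.tr k)) (r.tr k) (r.tr (k + 1)) pos a

/-- Some event happens at position `pos` with action `a` at some time. -/
def EventAtPos {n P Γ L} {M : LDPN n P Γ L} {c₀ : Conf P Γ L} (r : GlobalRun M c₀)
    (pos : List Bool) (a : Act L) : Prop :=
  ∃ k, EventAt r k pos a

/-- The node at position `pos` eventually carries label `c`. -/
def InTree {n P Γ L} {M : LDPN n P Γ L} {c₀ : Conf P Γ L} (r : GlobalRun M c₀)
    (pos : List Bool) (c : Conf P Γ L) : Prop :=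
  ∃ k, (r.tr k).label? pos = some c

/-- `m`-th position of the local run (rightmost path) starting at `q`. -/
def locpos (q : List Bool) (m : ℕ) : List Bool :=
  q ++ List.replicate m true

/-- Positions at which a local run starts: the root, or a left child
(the local initial configuration of a dynamically created instance). -/
def LocalStartPos (q : List Bool) : Prop :=
  q = [] ∨ ∃ q', q = q' ++ [false]

/-! ### Nested lock usage -/

/-- The local run starting at `q` uses locks in a nested style: there is a stack
discipline on the lock actions of this local run, i.e. every release releases the
latest acquired lock that has not yet been released. -/
def NestedLocal {n P Γ L} {M : LDPN n P Γ L} {c₀ : Conf P Γ L}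
    (r : GlobalRun M c₀) (q : List Bool) : Prop :=
  ∃ st : ℕ → List L,
    (∀ m l, EventAtPos r (locpos q m) (Act.acq l) → st (m + 1) = l :: st m) ∧
    (∀ m l, EventAtPos r (locpos q m) (Act.rel l) → st m = l :: st (m + 1)) ∧
    (∀ m, EventAtPos r (locpos q m) Act.tau → st (m + 1) = st m)

/-- A global run uses locks in a nested style iff every local run does. -/
def NestedRun {n P Γ L} {M : LDPN n P Γ L} {c₀ : Conf P Γ L} (r : GlobalRun M c₀) : Prop :=
  ∀ q, LocalStartPos q → NestedLocal r q

/-! ### LTL -/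

/-- LTL formulas. -/
inductive LTL (AP : Type) : Type
  | atom (a : AP) : LTL AP
  | neg (φ : LTL AP) : LTL AP
  | conj (φ ψ : LTL AP) : LTL AP
  | next (φ : LTL AP) : LTL AP
  | untl (φ ψ : LTL AP) : LTL AP

/-- Size of an LTL formula. -/
def LTL.size {AP} : LTL AP → ℕ
  | .atom _ => 1
  | .neg φ => φ.size + 1
  | .conj φ ψ => φ.size + ψ.size + 1
  | .next φ => φ.size + 1
  | .untl φ ψ => φ.size + ψ.size + 1

/-- Suffix of an ω-word. -/
def wshift {AP} (σ : ℕ → Set AP) (k : ℕ) : ℕ → Set AP := fun m => σ (m + k)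

/-- Satisfaction of an LTL formula by an ω-word over `2^AP`. -/
def LTL.Sat {AP} (σ : ℕ → Set AP) : LTL AP → Prop
  | .atom a => a ∈ σ 0
  | .neg φ => ¬ LTL.Sat σ φ
  | .conj φ ψ => LTL.Sat σ φ ∧ LTL.Sat σ ψ
  | .next φ => LTL.Sat (wshift σ 1) φ
  | .untl φ ψ => ∃ k, LTL.Sat (wshift σ k) ψ ∧ ∀ j, 1 ≤ j → j < k → LTL.Sat (wshift σ j) φ

/-- The global run `r` satisfies the single-indexed formula `f = ⋀ᵢ fᵢ`
w.r.t. the valuation `lam`: every local run of every instance of `Pᵢ` occurring in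
the run is infinite and its induced ω-word satisfies `fᵢ`. -/
def SatGlobal {n AP P Γ L} {M : LDPN n P Γ L} {c₀ : Conf P Γ L} (r : GlobalRun M c₀)
    (lam : AP → Set (Conf P Γ L)) (f : Fin n → LTL AP) : Prop :=
  ∀ q, LocalStartPos q → (∃ c, InTree r q c) →
    ∃ ρ : ℕ → Conf P Γ L,
      (∀ m, InTree r (locpos q m) (ρ m)) ∧
      ∀ i, (ρ 0).1 ∈ M.states i →
        LTL.Sat (fun m => {ap | ρ m ∈ lam ap}) (f i)

/-- The initial global configuration `{c₀}` satisfies `f`: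
`M` has a global run from `{c₀}` satisfying `f`. -/
def SatFrom {n AP P Γ L} (M : LDPN n P Γ L) (c₀ : Conf P Γ L)
    (lam : AP → Set (Conf P Γ L)) (f : Fin n → LTL AP) : Prop :=
  ∃ r : GlobalRun M c₀, SatGlobal r lam f

/-- The initial global configuration `{c₀}` satisfies `f` via a global run
that uses locks in a nested style. -/
def SatNested {n AP P Γ L} (M : LDPN n P Γ L) (c₀ : Conf P Γ L)
    (lam : AP → Set (Conf P Γ L)) (f : Fin n → LTL AP) : Prop :=
  ∃ r : GlobalRun M c₀, NestedRun r ∧ SatGlobal r lam f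

/-- A simple valuation: whether a local configuration satisfies an atomic
proposition depends only on its control location and its held locks. -/
def SimpleVal {AP P Γ L} (lam : AP → Set (Conf P Γ L)) : Prop :=
  ∀ ap (p : P) (w w' : List Γ) (Lk : Set L), (p, w, Lk) ∈ lam ap ↔ (p, w', Lk) ∈ lam ap

/-! ### Multi-automata -/

/-- An (L-)Multi-automaton with state space `Q`: the initial states are (the images
of) the elements of `S` (control locations, possibly paired with lock sets or
acquisition structures), and each transition is labelled by a stack symbol and a
set of DCLICs (elements of `Dc`). -/
structure MA (S Γ Dc Q : Type) where
  embed : S → Q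
  trans : Q → Γ → Set Dc → Q → Prop
  acc : Set Q

/-- The reachability relation of a multi-automaton, collecting the union of the
DCLIC-sets labelling the transitions used. -/
inductive MA.Steps {S Γ Dc Q} (A : MA S Γ Dc Q) : Q → List Γ → Set Dc → Q → Prop
  | nil (q : Q) : MA.Steps A q [] ∅ q
  | cons {q : Q} {γ : Γ} {D₁ : Set Dc} {q₁ : Q} {w : List Γ} {D₂ : Set Dc} {q₂ : Q} :
      A.trans q γ D₁ q₁ → MA.Steps A q₁ w D₂ q₂ → MA.Steps A q (γ :: w) (D₁ ∪ D₂) q₂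

/-- The language of a multi-automaton: triples `(p, ω, D)` such that from the
initial state for `p` some accepting state is reached reading `ω` while
collecting `D`. -/
def MA.Lang {S Γ Dc Q} (A : MA S Γ Dc Q) : Set (S × List Γ × Set Dc) :=
  {x | ∃ qf ∈ A.acc, A.Steps (A.embed x.1) x.2.1 x.2.2 qf}

/-- The set of transitions of a multi-automaton. -/
def MA.transSet {S Γ Dc Q} (A : MA S Γ Dc Q) : Set (Q × Γ × Set Dc × Q) :=
  {x | A.trans x.1 x.2.1 x.2.2.1 x.2.2.2}

/-- The family `Av` of (L-)multi-automata represents the valuation `lam`: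
a local configuration `(pω, L)` satisfies `ap` iff `((p,L), ω, ∅)` is accepted
by `Av ap`.  (A regular valuation is one representable in this way.) -/
def RegularVal {AP P Γ L} (Qv : Type) (Av : AP → MA (P × Set L) Γ (Conf P Γ L) Qv)
    (lam : AP → Set (Conf P Γ L)) : Prop :=
  ∀ ap (p : P) (w : List Γ) (Lk : Set L),
    (p, w, Lk) ∈ lam ap ↔ ((p, Lk), w, (∅ : Set (Conf P Γ L))) ∈ (Av ap).Lang

/-- `D_fp`: the set of DCLICs of the DPN `M` whose singleton initial global
configuration satisfies `f`. -/
def DfpSet {n AP P Γ} (M : LDPN n P Γ Empty) (lam : AP → Set (Conf P Γ Empty))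
    (f : Fin n → LTL AP) : Set (Conf P Γ Empty) :=
  {c | c ∈ M.DCLICs ∧ SatFrom M c lam f}

/-! ### Acquisition structures -/

/-- An acquisition structure `(R, RH, U, AH, A, X)`. -/
structure AcqStruct (L : Type) where
  R : Set L
  RH : Set (L × L)
  U : Set L
  AH : Set (L × L)
  A : Set L
  X : Set L

/-- Acyclicity of a directed graph on `L`. -/
def RelAcyclic {L : Type} (E : Set (L × L)) : Prop :=
  ∀ l, ¬ Relation.TransGen (fun x y => (x, y) ∈ E) l l

/-- Consistency of an acquisition structure: both graphs are acyclic and the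
held-throughout locks are neither used nor finally acquired. -/
def ASConsistent {L} (as : AcqStruct L) : Prop :=
  RelAcyclic as.RH ∧ RelAcyclic as.AH ∧ (as.X \ as.R) ∩ (as.U ∪ as.A) = ∅

/-- Compatibility of two consistent acquisition structures. -/
def ASCompatible {L} (a b : AcqStruct L) : Prop :=
  a.X ∩ b.X = ∅ ∧
  (a.A ∪ (a.X \ a.R)) ∩ (b.A ∪ (b.X \ b.R)) = ∅ ∧
  RelAcyclic (a.RH ∪ b.RH) ∧
  RelAcyclic (a.AH ∪ b.AH) ∧
  (a.A ∪ a.U) ∩ (b.X \ b.R) = ∅ ∧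
  (b.A ∪ b.U) ∩ (a.X \ a.R) = ∅

/-- Componentwise union of acquisition structures. -/
def asUnion {L} (a b : AcqStruct L) : AcqStruct L :=
  ⟨a.R ∪ b.R, a.RH ∪ b.RH, a.U ∪ b.U, a.AH ∪ b.AH, a.A ∪ b.A, a.X ∪ b.X⟩

/-- Acquisition structures form a finite type when `L` is finite. -/
def acqStructEquiv (L : Type) :
    AcqStruct L ≃ Set L × Set (L × L) × Set L × Set (L × L) × Set L × Set L where
  toFun as := (as.R, as.RH, as.U, as.AH, as.A, as.X)
  invFun x := ⟨x.1, x.2.1, x.2.2.1, x.2.2.2.1, x.2.2.2.2.1, x.2.2.2.2.2⟩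
  left_inv _ := rfl
  right_inv _ := rfl

instance {L : Type} [Finite L] : Finite (AcqStruct L) :=
  Finite.of_equiv _ (acqStructEquiv L).symm

/-- The update of an acquisition structure determined by the action of a rule:
`ASUpd a as' as` holds iff applying a rule with action `a` whose successor
acquisition structure is `as'` yields the acquisition structure `as`
(including the side conditions on `a`). -/
def ASUpd {L} : Act L → AcqStruct L → AcqStruct L → Prop
  | .tau, as', as => as = as'
  | .rel l, as', as =>
      l ∉ as'.X ∪ as'.R ∧
      as = ⟨as'.R ∪ {l}, as'.RH, as'.U, as'.AH, as'.A, as'.X ∪ {l}⟩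
  | .acq l, as', as =>
      (l ∈ as'.R ∩ as'.X ∧
        as = ⟨as'.R \ {l},
              (as'.RH \ (Set.univ ×ˢ {l})) ∪ ({l} ×ˢ (as'.R \ {l})),
              as'.U ∪ {l}, as'.AH, as'.A, as'.X \ {l}⟩) ∨
      (¬ (l ∈ as'.R ∩ as'.X) ∧ l ∉ as'.A ∧ l ∈ as'.X ∧
        as = ⟨as'.R, as'.RH, as'.U,
              as'.AH ∪ ({l} ×ˢ as'.U), as'.A ∪ {l}, as'.X \ {l}⟩)

/-- Lifting of an original rule (together with acquisition structures
`as`, `as'`, `as''`) to a rule of the product DPN. -/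
def liftRule {P Γ L} : Rule P Γ L → AcqStruct L → AcqStruct L → AcqStruct L →
    Rule (P × AcqStruct L) Γ Empty
  | .simple _ p γ p' w, as, as', _ => .simple Act.tau (p, as) γ (p', as') w
  | .spawn _ p γ p' w p₂ w₂, as, as', as'' =>
      .spawn Act.tau (p, as) γ (p', as') w (p₂, as'') w₂

/-- The side conditions under which a rule of the product DPN is generated
from an original rule and acquisition structures `as`, `as'`, `as''`. -/
def prodCond {P Γ L} : Rule P Γ L → AcqStruct L → AcqStruct L → AcqStruct L → Prop
  | .simple a _ _ _ _, as, as', _ =>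
      ASConsistent as ∧ ASConsistent as' ∧ ASUpd a as' as
  | .spawn a _ _ _ _ _ _, as, as', as'' =>
      ASConsistent as ∧ ASConsistent as' ∧ ASConsistent as'' ∧
      ASCompatible as' as'' ∧ as''.R = ∅ ∧ as''.X = ∅ ∧
      ASUpd a (asUnion as' as'') as

/-- The product DPN `M'` of an L-DPN `M` with the consistent acquisition
structures: control locations are pairs `(p, as)` with `as` consistent, and the
rules are those of `M` with the acquisition structures updated accordingly. -/
def productLDPN {n P Γ L} (M : LDPN n P Γ L) : LDPN n (P × AcqStruct L) Γ Empty where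
  states i := {q | q.1 ∈ M.states i ∧ ASConsistent q.2}
  alph i := M.alph i
  rules i := {ru | ∃ r₀ ∈ M.rules i, ∃ as as' as'',
    prodCond r₀ as as' as'' ∧ ru = liftRule r₀ as as' as''}

/-- Lifting of a valuation of the L-DPN to a valuation of the product DPN:
`(p, as)ω ∈ λ'(ap)` iff `(pω, as_X) ∈ λ(ap)`. -/
def liftVal {AP P Γ L} (lam : AP → Set (Conf P Γ L)) :
    AP → Set (Conf (P × AcqStruct L) Γ Empty) :=
  fun ap => {c | (c.1.1, c.2.1, c.1.2.X) ∈ lam ap}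

/-! ### The acquisition structure of a subtree of a global run -/

/-- Start positions of the local-run segments lying in the subtree rooted at `v`:
`v` itself, and the left children below `v`. -/
def LocalStartIn (v q : List Bool) : Prop :=
  q = v ∨ (v <+: q ∧ ∃ q', q = q' ++ [false])

/-- An initial release: a release of `l` at step `m` of the local run starting
at `q`, with no earlier acquisition of `l` in the same local run. -/
def InitRelAt {n P Γ L} {M : LDPN n P Γ L} {c₀ : Conf P Γ L} (r : GlobalRun M c₀)
    (q : List Bool) (k m : ℕ) (l : L) : Prop :=
  EventAt r k (locpos q m) (Act.rel l) ∧
  ∀ m' < m, ¬ EventAtPos r (locpos q m') (Act.acq l)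

/-- A final acquisition: an acquisition of `l` at step `m` of the local run
starting at `q`, with no later release of `l` in the same local run. -/
def FinAcqAt {n P Γ L} {M : LDPN n P Γ L} {c₀ : Conf P Γ L} (r : GlobalRun M c₀)
    (q : List Bool) (k m : ℕ) (l : L) : Prop :=
  EventAt r k (locpos q m) (Act.acq l) ∧
  ∀ m', m < m' → ¬ EventAtPos r (locpos q m') (Act.rel l)

/-- A usage of `l`: an acquisition or release of `l` that is neither a final
acquisition nor an initial release. -/
def UsageAt {n P Γ L} {M : LDPN n P Γ L} {c₀ : Conf P Γ L} (r : GlobalRun M c₀)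
    (q : List Bool) (k m : ℕ) (l : L) : Prop :=
  (EventAt r k (locpos q m) (Act.acq l) ∧ ¬ FinAcqAt r q k m l) ∨
  (EventAt r k (locpos q m) (Act.rel l) ∧ ¬ InitRelAt r q k m l)

/-- The acquisition structure of the subtree of the global run `r` rooted at
position `v`. -/
def acqStructOf {n P Γ L} {M : LDPN n P Γ L} {c₀ : Conf P Γ L} (r : GlobalRun M c₀)
    (v : List Bool) : AcqStruct L where
  R := {l | ∃ q k m, LocalStartIn v q ∧ InitRelAt r q k m l}
  RH := {lp | ∃ q k m, LocalStartIn v q ∧ InitRelAt r q k m lp.2 ∧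
          ∃ q₂ k₂ m₂, LocalStartIn v q₂ ∧ k₂ < k ∧ UsageAt r q₂ k₂ m₂ lp.1}
  U := {l | ∃ q k m, LocalStartIn v q ∧ UsageAt r q k m l}
  AH := {lp | ∃ q k m, LocalStartIn v q ∧ FinAcqAt r q k m lp.1 ∧
          ∃ q₂ k₂ m₂, LocalStartIn v q₂ ∧ k < k₂ ∧ UsageAt r q₂ k₂ m₂ lp.2}
  A := {l | ∃ q k m, LocalStartIn v q ∧ FinAcqAt r q k m l}
  X := {l | ∃ c, InTree r v c ∧ l ∈ c.2.2}


/-!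
Every event of a global run happens at a single instant, and at every instant a lock is held by
at most one leaf, since acquiring it requires it to be free. Both graphs of an acquisition
structure are acyclic because their edges increase a time stamp: along `RH` the time of an
initial release, which precedes every usage of the lock in the same subtree because until then
the lock is held by the main local run of the subtree, and along `AH` the time of a final
acquisition, which follows every usage of the lock. A lock in `X \ R` of the right child is held by the main
local run of the right child forever after the spawn, so no instance below the spawning node can
acquire or release it. The left child starts without locks, so it has neither held locks nor
initial releases, and two final acquisitions of the same lock happen at the same instant, hence
at the same node, which cannot lie in both subtrees.
-/

namespace RelAcyclic

variable {L : Type} {E F : Set (L × L)}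

lemma mono (hEF : E ⊆ F) (hF : RelAcyclic F) : RelAcyclic E :=
  fun l h => hF l (Relation.TransGen.mono (fun _ _ hxy => hEF hxy) l l h)

lemma of_forall_exists_lt {α : Type} [Preorder α] (S : L → α → Prop)
    (h : ∀ x y, (x, y) ∈ E → ∃ t, S y t ∧ ∀ s, S x s → s < t) : RelAcyclic E := by
  have chain : ∀ x y, Relation.TransGen (fun x y => (x, y) ∈ E) x y →
      ∃ t, S y t ∧ ∀ s, S x s → s < t := by
    intro x y hxy
    induction hxy with
    | single hxy => exact h _ _ hxy
    | tail _ hyz ih =>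
      obtain ⟨t, ht, hlt⟩ := ih
      obtain ⟨u, hu, hlt'⟩ := h _ _ hyz
      exact ⟨u, hu, fun s hs => (hlt s hs).trans (hlt' t ht)⟩
  intro l hl
  obtain ⟨t, ht, hlt⟩ := chain l l hl
  exact lt_irrefl t (hlt t ht)

lemma of_forall_exists_lt' {α : Type} [Preorder α] (S : L → α → Prop)
    (h : ∀ x y, (x, y) ∈ E → ∃ s, S x s ∧ ∀ t, S y t → s < t) : RelAcyclic E := by
  have hswap : RelAcyclic (Prod.swap ⁻¹' E) :=
    of_forall_exists_lt (α := αᵒᵈ) (fun l t => S l (OrderDual.ofDual t))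
      fun x y hxy => h y x hxy
  exact fun l hl => hswap l (Relation.transGen_swap.mpr hl)

end RelAcyclic

namespace GTree

variable {C : Type}

def leafAt : GTree C → List Bool → Option C
  | .leaf c, [] => some c
  | .node1 _ t, true :: p => t.leafAt p
  | .node2 _ _ t, true :: p => t.leafAt p
  | .node2 _ t _, false :: p => t.leafAt p
  | _, _ => none

@[simp] lemma leafAt_leaf {c d : C} {p : List Bool} :
    (leaf c).leafAt p = some d ↔ p = [] ∧ d = c := by
  rcases p with _ | ⟨_ | _, _⟩ <;> simp [leafAt, eq_comm]

lemma label?_nil (t : GTree C) : t.label? [] = some t.rootLabel := by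
  cases t <;> rfl

@[simp] lemma label?_leaf {c d : C} {p : List Bool} :
    (leaf c).label? p = some d ↔ p = [] ∧ d = c := by
  rcases p with _ | ⟨_ | _, _⟩ <;> simp [label?, rootLabel, eq_comm]

lemma label?_of_leafAt {t : GTree C} {p : List Bool} {c : C}
    (h : t.leafAt p = some c) : t.label? p = some c := by
  induction t generalizing p with
  | leaf d => obtain ⟨rfl, rfl⟩ := leafAt_leaf.mp h; rfl
  | _ => rcases p with _ | ⟨_ | _, _⟩ <;> simp_all [leafAt, label?]

lemma label?_append_of_leafAt {t : GTree C} {p : List Bool} {c : C}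
    (h : t.leafAt p = some c) {q : List Bool} (hq : q ≠ []) : t.label? (p ++ q) = none := by
  induction t generalizing p with
  | leaf d =>
    obtain ⟨rfl, rfl⟩ := leafAt_leaf.mp h
    rcases q with _ | ⟨_ | _, _⟩ <;> simp_all [label?]
  | _ => rcases p with _ | ⟨_ | _, _⟩ <;> simp_all [leafAt, label?]

lemma exists_label?_of_label?_append {t : GTree C} {p q : List Bool} {c : C}
    (h : t.label? (p ++ q) = some c) : ∃ d, t.label? p = some d := by
  induction t generalizing p with
  | leaf d =>
    obtain ⟨hpq, -⟩ := label?_leaf.mp h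
    exact ⟨d, by simp [(List.append_eq_nil_iff.mp hpq).1]⟩
  | _ => rcases p with _ | ⟨_ | _, _⟩ <;> simp_all [label?]

lemma mem_leaves_of_leafAt {t : GTree C} {p : List Bool} {c : C}
    (h : t.leafAt p = some c) : c ∈ t.leaves := by
  induction t generalizing p with
  | leaf d => simp [leaves, (leafAt_leaf.mp h).2]
  | node1 d t ih =>
    rcases p with _ | ⟨_ | _, _⟩ <;> simp only [leafAt, reduceCtorEq] at h
    exact ih h
  | node2 d tl tr ihl ihr =>
    rcases p with _ | ⟨_ | _, _⟩ <;> simp only [leafAt, reduceCtorEq] at h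
    · exact Multiset.mem_add.mpr (Or.inl (ihl h))
    · exact Multiset.mem_add.mpr (Or.inr (ihr h))

lemma exists_leafAt_append_replicate {t : GTree C} {p : List Bool} {c : C}
    (h : t.label? p = some c) : ∃ j d, t.leafAt (p ++ List.replicate j true) = some d := by
  induction t generalizing p c with
  | leaf d => exact ⟨0, d, by simp [(label?_leaf.mp h).1]⟩
  | node1 d t ih =>
    rcases p with _ | ⟨_ | _, p⟩
    · obtain ⟨j, e, he⟩ := ih (p := []) t.label?_nil
      exact ⟨j + 1, e, by simpa [List.replicate_succ, leafAt] using he⟩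
    · simp [label?] at h
    · exact ih h
  | node2 d tl tr _ ih =>
    rcases p with _ | ⟨_ | _, p⟩
    · obtain ⟨j, e, he⟩ := ih (p := []) tr.label?_nil
      exact ⟨j + 1, e, by simpa [List.replicate_succ, leafAt] using he⟩
    · simp_all [label?, leafAt]
    · exact ih h

lemma exists_leafAt_locpos {t : GTree C} {q : List Bool} {i : ℕ} {c : C}
    (h : t.label? (locpos q i) = some c) : ∃ j d, i ≤ j ∧ t.leafAt (locpos q j) = some d := by
  obtain ⟨j, d, hd⟩ := exists_leafAt_append_replicate h
  exact ⟨i + j, d, by omega, by rwa [locpos, List.replicate_add, ← List.append_assoc]⟩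

variable {P Γ L : Type}

def Holds (t : GTree (Conf P Γ L)) (pos : List Bool) (l : L) : Prop :=
  ∃ c, t.leafAt pos = some c ∧ l ∈ c.2.2

def LockExclusive (t : GTree (Conf P Γ L)) : Prop :=
  ∀ p p' l, t.Holds p l → t.Holds p' l → p = p'

lemma Holds.not_freeIn {t : GTree (Conf P Γ L)} {p : List Bool} {l : L} (h : t.Holds p l) :
    ¬ freeIn t l := by
  obtain ⟨c, hc, hl⟩ := h
  exact fun hfree => hfree c (mem_leaves_of_leafAt hc) hl

end GTree

lemma locpos_zero (q : List Bool) : locpos q 0 = q := List.append_nil q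

lemma locpos_add (q : List Bool) (m j : ℕ) :
    locpos q (m + j) = locpos q m ++ List.replicate j true := by
  rw [locpos, locpos, List.replicate_add, List.append_assoc]

lemma locpos_succ (q : List Bool) (m : ℕ) : locpos q (m + 1) = locpos q m ++ [true] :=
  locpos_add q m 1

lemma prefix_locpos (q : List Bool) (m : ℕ) : q <+: locpos q m := ⟨_, rfl⟩

def Act.step {L : Type} : Act L → Set L → Set L
  | .tau, s => s
  | .acq l, s => s ∪ {l}
  | .rel l, s => s \ {l}

lemma Act.mem_step_of_ne_rel {L : Type} {a : Act L} {s : Set L} {l : L} (ha : a ≠ .rel l)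
    (hl : l ∈ s) : l ∈ a.step s := by
  cases a with
  | tau => exact hl
  | acq _ => exact Or.inl hl
  | rel l' => exact ⟨hl, fun h => ha (by rw [Set.mem_singleton_iff.mp h])⟩

lemma Act.mem_of_mem_step {L : Type} {a : Act L} {s : Set L} {l : L} (hl : l ∈ a.step s) :
    l ∈ s ∨ a = .acq l := by
  cases a with
  | tau => exact Or.inl hl
  | acq _ => exact hl.imp id (fun h => by rw [Set.mem_singleton_iff.mp h])
  | rel _ => exact Or.inl hl.1

namespace ExpandA

variable {n : ℕ} {P Γ L : Type} {M : LDPN n P Γ L} {free : L → Prop}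
  {t t' : GTree (Conf P Γ L)} {pos : List Bool} {a : Act L}

lemma exists_leafAt (h : ExpandA M free t t' pos a) :
    ∃ c c' : Conf P Γ L, t.leafAt pos = some c ∧ t'.leafAt (pos ++ [true]) = some c' ∧
      c'.2.2 = a.step c.2.2 ∧ (∀ l, a = .acq l → free l) ∧ (∀ l, a = .rel l → l ∈ c.2.2) := by
  induction h with
  | in_node1 _ ih | in_node2_left _ ih | in_node2_right _ ih => exact ih
  | _ => refine ⟨_, _, rfl, rfl, rfl, ?_, ?_⟩ <;> simp_all

lemma leafAt_of_ne (h : ExpandA M free t t' pos a) {p : List Bool} {d : Conf P Γ L}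
    (hp : p ≠ pos) (hd : t.leafAt p = some d) : t'.leafAt p = some d := by
  induction h generalizing p with
  | in_node1 _ ih | in_node2_left _ ih | in_node2_right _ ih =>
    rcases p with _ | ⟨_ | _, p⟩ <;> simp_all [GTree.leafAt]
  | _ => exact absurd (GTree.leafAt_leaf.mp hd).1 hp

lemma leafAt_cases (h : ExpandA M free t t' pos a) {p : List Bool} {d : Conf P Γ L}
    (hd : t'.leafAt p = some d) :
    (p ≠ pos ∧ t.leafAt p = some d) ∨ p = pos ++ [true] ∨
      (p = pos ++ [false] ∧ d.2.2 = ∅) := by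
  induction h generalizing p <;> rcases p with _ | ⟨_ | _, p⟩ <;> simp_all [GTree.leafAt]

lemma label?_of_label? (h : ExpandA M free t t' pos a) {p : List Bool} {d : Conf P Γ L}
    (hd : t.label? p = some d) : t'.label? p = some d := by
  induction h generalizing p with
  | in_node1 _ ih | in_node2_left _ ih | in_node2_right _ ih =>
    rcases p with _ | ⟨_ | _, p⟩ <;> simp_all [GTree.label?, GTree.rootLabel]
  | _ => obtain ⟨rfl, rfl⟩ := GTree.label?_leaf.mp hd; rfl

lemma label?_cases (h : ExpandA M free t t' pos a) {p : List Bool} {d : Conf P Γ L}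
    (hd : t'.label? p = some d) :
    t.label? p = some d ∨ (p = pos ++ [true] ∧ t'.leafAt p = some d) ∨
      (p = pos ++ [false] ∧ t'.leafAt p = some d ∧ d.2.2 = ∅) := by
  induction h generalizing p <;> rcases p with _ | ⟨_ | _, p⟩ <;>
    simp_all [GTree.label?, GTree.leafAt, GTree.rootLabel]

lemma pos_eq {pos' : List Bool} {a' : Act L} (h : ExpandA M free t t' pos a)
    (h' : ExpandA M free t t' pos' a') : pos = pos' := by
  by_contra hne
  obtain ⟨c, c', hc, hc', -⟩ := h.exists_leafAt
  have := GTree.label?_append_of_leafAt (h'.leafAt_of_ne hne hc) (q := [true]) (by simp)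
  rw [GTree.label?_of_leafAt hc'] at this
  cases this

lemma holds_cases (h : ExpandA M free t t' pos a) {p : List Bool} {l : L} (hp : t'.Holds p l) :
    (p ≠ pos ∧ t.Holds p l) ∨ (p = pos ++ [true] ∧ (t.Holds pos l ∨ (a = .acq l ∧ free l))) := by
  obtain ⟨d, hd, hl⟩ := hp
  obtain ⟨c, c', hc, hc', hstep, hacq, -⟩ := h.exists_leafAt
  rcases h.leafAt_cases hd with ⟨hne, hd⟩ | rfl | ⟨-, hempty⟩
  · exact Or.inl ⟨hne, d, hd, hl⟩
  · obtain rfl : c' = d := Option.some.inj (hc'.symm.trans hd)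
    rw [hstep] at hl
    exact Or.inr ⟨rfl, (Act.mem_of_mem_step hl).imp (fun hl => ⟨c, hc, hl⟩)
      fun ha => ⟨ha, hacq _ ha⟩⟩
  · simp [hempty] at hl

lemma lockExclusive (h : ExpandA M (freeIn t) t t' pos a) (ht : t.LockExclusive) :
    t'.LockExclusive := by
  intro p p' l hp hp'
  have old_new : ∀ p, p ≠ pos → t.Holds p l →
      ¬ (t.Holds pos l ∨ (a = .acq l ∧ freeIn t l)) := by
    rintro p hne hp (hpos | ⟨-, hfree⟩)
    exacts [hne (ht p pos l hp hpos), hp.not_freeIn hfree]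
  rcases h.holds_cases hp with ⟨hne, hp⟩ | ⟨rfl, hnew⟩ <;>
    rcases h.holds_cases hp' with ⟨hne', hp'⟩ | ⟨rfl, hnew'⟩
  · exact ht p p' l hp hp'
  · exact absurd hnew' (old_new p hne hp)
  · exact absurd hnew (old_new p' hne' hp')
  · rfl

end ExpandA

namespace GlobalRun

variable {n : ℕ} {P Γ L : Type} {M : LDPN n P Γ L} {c₀ : Conf P Γ L} (r : GlobalRun M c₀)

lemma label?_mono {k k' : ℕ} (hk : k ≤ k') {pos : List Bool} {c : Conf P Γ L}
    (h : (r.tr k).label? pos = some c) : (r.tr k').label? pos = some c := by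
  induction k', hk using Nat.le_induction with
  | base => exact h
  | succ k' _ ih =>
    rcases r.step k' with he | ⟨_, _, he⟩
    · rwa [he]
    · exact he.label?_of_label? ih

lemma lockExclusive (k : ℕ) : (r.tr k).LockExclusive := by
  induction k with
  | zero =>
    rintro p p' l ⟨c, hc, -⟩ ⟨c', hc', -⟩
    rw [r.init] at hc hc'
    rw [(GTree.leafAt_leaf.mp hc).1, (GTree.leafAt_leaf.mp hc').1]
  | succ k ih =>
    rcases r.step k with he | ⟨_, _, he⟩
    · rwa [he]
    · exact he.lockExclusive ih

lemma exists_eventAt_of_label? {k : ℕ} {pos : List Bool} {b : Bool} {d : Conf P Γ L}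
    (h : (r.tr k).label? (pos ++ [b]) = some d) :
    ∃ k' a, k' < k ∧ EventAt r k' pos a ∧ (r.tr (k' + 1)).leafAt (pos ++ [b]) = some d ∧
      (b = false → d.2.2 = ∅) := by
  induction k with
  | zero => simp [r.init] at h
  | succ k ih =>
    rcases r.step k with he | ⟨pos₀, a₀, he⟩
    · obtain ⟨k', a, hk, rest⟩ := ih (by rwa [he] at h)
      exact ⟨k', a, by omega, rest⟩
    · rcases he.label?_cases h with h0 | ⟨hpos, hd⟩ | ⟨hpos, hd, hempty⟩
      · obtain ⟨k', a, hk, rest⟩ := ih h0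
        exact ⟨k', a, by omega, rest⟩
      · obtain ⟨rfl, rfl⟩ : pos = pos₀ ∧ b = true := by simpa [eq_comm] using hpos
        exact ⟨k, a₀, by omega, he, hd, by simp⟩
      · obtain ⟨rfl, rfl⟩ : pos = pos₀ ∧ b = false := by simpa [eq_comm] using hpos
        exact ⟨k, a₀, by omega, he, hd, fun _ => hempty⟩

lemma exists_label?_sibling {k : ℕ} {v : List Bool} {d : Conf P Γ L}
    (h : (r.tr k).label? (v ++ [false]) = some d) :
    ∃ c, (r.tr k).label? (v ++ [true]) = some c := by
  obtain ⟨k', _, hk, hev, -⟩ := r.exists_eventAt_of_label? h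
  obtain ⟨-, c, -, hc, -⟩ := ExpandA.exists_leafAt hev
  exact ⟨c, r.label?_mono hk (GTree.label?_of_leafAt hc)⟩

end GlobalRun

section LocalRuns

variable {n : ℕ} {P Γ L : Type} {M : LDPN n P Γ L} {c₀ : Conf P Γ L} {r : GlobalRun M c₀}
  {q pos : List Bool} {k k' m : ℕ} {a : Act L} {l : L}

lemma EventAt.exists_leafAt (h : EventAt r k pos a) :
    ∃ c c' : Conf P Γ L, (r.tr k).leafAt pos = some c ∧
      (r.tr (k + 1)).leafAt (pos ++ [true]) = some c' ∧ c'.2.2 = a.step c.2.2 ∧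
      (∀ l, a = .acq l → freeIn (r.tr k) l) ∧ (∀ l, a = .rel l → l ∈ c.2.2) :=
  ExpandA.exists_leafAt h

lemma EventAt.pos_eq {pos' : List Bool} {a' : Act L} (h : EventAt r k pos a)
    (h' : EventAt r k pos' a') : pos = pos' :=
  ExpandA.pos_eq h h'

lemma EventAt.not_holds_of_acq (h : EventAt r k pos (.acq l)) (p : List Bool) :
    ¬ (r.tr k).Holds p l := by
  obtain ⟨-, -, -, -, -, hfree, -⟩ := h.exists_leafAt
  exact fun hp => hp.not_freeIn (hfree l rfl)

lemma EventAt.holds_of_rel (h : EventAt r k pos (.rel l)) : (r.tr k).Holds pos l := by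
  obtain ⟨c, -, hc, -, -, -, hheld⟩ := h.exists_leafAt
  exact ⟨c, hc, hheld l rfl⟩

lemma EventAt.eq_of_rel_of_holds (h : EventAt r k pos (.rel l)) {p : List Bool}
    (hp : (r.tr k).Holds p l) : pos = p :=
  r.lockExclusive k pos p l h.holds_of_rel hp

lemma EventAt.exists_label?_of_prefix (h : EventAt r k pos a) {w : List Bool} (hw : w <+: pos) :
    ∃ c, (r.tr k).label? w = some c := by
  obtain ⟨c, -, hc, -⟩ := h.exists_leafAt
  obtain ⟨s, rfl⟩ := hw
  exact GTree.exists_label?_of_label?_append (GTree.label?_of_leafAt hc)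

lemma inTree_of_leafAt {c : Conf P Γ L} (h : (r.tr k).leafAt pos = some c) : InTree r pos c :=
  ⟨k, GTree.label?_of_leafAt h⟩

lemma InTree.eq {c c' : Conf P Γ L} (h : InTree r pos c) (h' : InTree r pos c') : c = c' := by
  obtain ⟨k, hk⟩ := h
  obtain ⟨k', hk'⟩ := h'
  rcases le_total k k' with hle | hle
  · exact Option.some.inj ((r.label?_mono hle hk).symm.trans hk')
  · exact Option.some.inj (hk.symm.trans (r.label?_mono hle hk'))

lemma InTree.exists_eventAt {d : Conf P Γ L} (h : InTree r (pos ++ [true]) d) :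
    ∃ k a c, EventAt r k pos a ∧ InTree r pos c ∧ d.2.2 = Act.step a c.2.2 := by
  obtain ⟨k, hk⟩ := h
  obtain ⟨k', a, -, hev, hd, -⟩ := r.exists_eventAt_of_label? hk
  obtain ⟨c, c', hc, hc', hstep, -⟩ := hev.exists_leafAt
  obtain rfl : c' = d := Option.some.inj (hc'.symm.trans hd)
  exact ⟨k', a, c, hev, inTree_of_leafAt hc, hstep⟩

lemma InTree.locks_eq_empty {d : Conf P Γ L} (h : InTree r (pos ++ [false]) d) : d.2.2 = ∅ := by
  obtain ⟨k, hk⟩ := h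
  obtain ⟨-, -, -, -, -, hempty⟩ := r.exists_eventAt_of_label? hk
  exact hempty rfl

lemma locks_induction (Φ : Set L → Prop) {i m : ℕ} (him : i ≤ m)
    (hstep : ∀ j k a s, i ≤ j → j < m → EventAt r k (locpos q j) a → Φ s → Φ (Act.step a s))
    {c d : Conf P Γ L} (hc : InTree r (locpos q i) c) (hΦ : Φ c.2.2)
    (hd : InTree r (locpos q m) d) : Φ d.2.2 := by
  induction m, him using Nat.le_induction generalizing d with
  | base => rwa [hc.eq hd] at hΦ
  | succ m him ih =>
    rw [locpos_succ] at hd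
    obtain ⟨k, a, c', hev, hc', hd⟩ := hd.exists_eventAt
    rw [hd]
    exact hstep m k a _ him (by omega) hev
      (ih (fun j k a s hij hjm => hstep j k a s hij (by omega)) hc')

lemma lt_of_leafAt_locpos {j m : ℕ} {c d : Conf P Γ L}
    (hc : (r.tr k).leafAt (locpos q j) = some c) (hd : (r.tr k').label? (locpos q m) = some d)
    (hjm : j < m) : k < k' := by
  by_contra! hle
  have := r.label?_mono hle hd
  rw [show m = j + (m - j) by omega, locpos_add,
    GTree.label?_append_of_leafAt hc (by simp; omega)] at this
  cases this

lemma FinAcqAt.mem_locks (h : FinAcqAt r q k m l) {j : ℕ} (hj : m < j) {d : Conf P Γ L}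
    (hd : InTree r (locpos q j) d) : l ∈ d.2.2 := by
  obtain ⟨c, c', -, hc', hstep, -⟩ := h.1.exists_leafAt
  rw [← locpos_succ] at hc'
  refine locks_induction (l ∈ ·) hj (fun j' k a s hj' _ hev hs => ?_) (inTree_of_leafAt hc')
    (by simp [hstep, Act.step]) hd
  exact Act.mem_step_of_ne_rel (by rintro rfl; exact h.2 j' hj' ⟨k, hev⟩) hs

lemma InitRelAt.mem_locks (h : InitRelAt r q k m l) {j : ℕ} (hj : j ≤ m) {d : Conf P Γ L}
    (hd : InTree r (locpos q j) d) : l ∈ d.2.2 := by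
  by_contra hl
  obtain ⟨c, -, hc, -, -, -, hheld⟩ := h.1.exists_leafAt
  refine locks_induction (l ∉ ·) hj (fun j' k a s _ hj' hev hs hmem => ?_) hd hl
    (inTree_of_leafAt hc) (hheld l rfl)
  rcases Act.mem_of_mem_step hmem with hmem | rfl
  · exact hs hmem
  · exact h.2 j' hj' ⟨k, hev⟩

/-- A release of the lock would need an earlier re-acquisition in the same local run, which is
impossible while the lock is held there. -/
lemma mem_locks_of_forall_not_initRelAt {c : Conf P Γ L} (hc : InTree r q c) (hl : l ∈ c.2.2)
    (hni : ∀ k m, ¬ InitRelAt r q k m l) (j : ℕ) {d : Conf P Γ L}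
    (hd : InTree r (locpos q j) d) : l ∈ d.2.2 := by
  induction j using Nat.strong_induction_on generalizing d with
  | _ j ih =>
  cases j with
  | zero => rw [locpos_zero] at hd; rwa [← hc.eq hd]
  | succ j =>
    rw [locpos_succ] at hd
    obtain ⟨k, a, c', hev, hc', hd⟩ := hd.exists_eventAt
    rw [hd]
    refine Act.mem_step_of_ne_rel ?_ (ih j (by omega) hc')
    rintro rfl
    obtain ⟨j', hj', k', hacq⟩ : ∃ j' < j, EventAtPos r (locpos q j') (.acq l) := by
      by_contra! h
      exact hni k j ⟨hev, h⟩
    obtain ⟨e, -, he, -⟩ := hacq.exists_leafAt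
    exact hacq.not_holds_of_acq _ ⟨e, he, ih j' (by omega) (inTree_of_leafAt he)⟩

lemma FinAcqAt.holds (h : FinAcqAt r q k m l) (hk : k < k') :
    ∃ j, m < j ∧ (r.tr k').Holds (locpos q j) l := by
  obtain ⟨-, c', -, hc', -⟩ := h.1.exists_leafAt
  rw [← locpos_succ] at hc'
  obtain ⟨j, d, hj, hd⟩ :=
    GTree.exists_leafAt_locpos (r.label?_mono hk (GTree.label?_of_leafAt hc'))
  exact ⟨j, hj, d, hd, h.mem_locks hj (inTree_of_leafAt hd)⟩

lemma InitRelAt.holds (h : InitRelAt r q k m l) {c : Conf P Γ L}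
    (hq : (r.tr k').label? q = some c) (hk : k' ≤ k) :
    ∃ j, j ≤ m ∧ (r.tr k').Holds (locpos q j) l := by
  obtain ⟨j, d, -, hd⟩ := GTree.exists_leafAt_locpos (i := 0) (by rwa [locpos_zero])
  obtain ⟨e, -, he, -⟩ := h.1.exists_leafAt
  have hj : j ≤ m := by
    by_contra! hmj
    exact absurd (lt_of_leafAt_locpos he (GTree.label?_of_leafAt hd) hmj) (by omega)
  exact ⟨j, hj, d, hd, h.mem_locks hj (inTree_of_leafAt hd)⟩

lemma holds_of_forall_not_initRelAt {c c' : Conf P Γ L} (hc : InTree r q c) (hl : l ∈ c.2.2)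
    (hni : ∀ k m, ¬ InitRelAt r q k m l) (hq : (r.tr k).label? q = some c') :
    ∃ j, (r.tr k).Holds (locpos q j) l := by
  obtain ⟨j, d, -, hd⟩ := GTree.exists_leafAt_locpos (i := 0) (by rwa [locpos_zero])
  exact ⟨j, d, hd, mem_locks_of_forall_not_initRelAt hc hl hni j (inTree_of_leafAt hd)⟩

end LocalRuns
namespace LocalStartIn

variable {w q q' : List Bool}

lemma isPrefix (h : LocalStartIn w q) : w <+: q := by
  rcases h with rfl | ⟨h, -⟩
  exacts [List.prefix_refl _, h]

/-- A local run starting strictly below `w` starts at a left child, so it is not a tail of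
another local run starting below `w`. -/
lemma locpos_inj (hq : LocalStartIn w q) (hq' : LocalStartIn w q') {m m' : ℕ}
    (h : locpos q m = locpos q' m') : q = q' ∧ m = m' := by
  wlog hmm : m ≤ m' generalizing q q' m m'
  · exact (this hq' hq h.symm (by omega)).imp Eq.symm Eq.symm
  have hq_eq : q = q' ++ List.replicate (m' - m) true := by
    apply List.append_cancel_right (bs := List.replicate m true)
    rw [List.append_assoc, ← List.replicate_add, show m' - m + m = m' by omega]
    exact h
  obtain hm | hm := Nat.eq_zero_or_pos (m' - m)
  · exact ⟨by simpa [hm] using hq_eq, by omega⟩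
  exfalso
  have hqw : q = w := by
    rcases hq with hq | ⟨-, pre, hpre⟩
    · exact hq
    · obtain ⟨j, hj⟩ := Nat.exists_eq_add_of_lt hm
      rw [hj, List.replicate_succ', hpre] at hq_eq
      simpa using congrArg List.getLast? hq_eq
  have := hq'.isPrefix.length_le
  rw [← hqw, hq_eq, List.length_append, List.length_replicate] at this
  omega

lemma locpos_ne (hq : LocalStartIn (w ++ [true]) q) (hq' : LocalStartIn (w ++ [false]) q')
    {m m' : ℕ} : locpos q m ≠ locpos q' m' := by
  intro h
  have h₁ := hq.isPrefix.trans (prefix_locpos q m)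
  have h₂ := hq'.isPrefix.trans (prefix_locpos q' m')
  rw [h] at h₁
  have := List.IsPrefix.eq_of_length
    (List.prefix_of_prefix_length_le h₁ h₂ (by simp)) (by simp)
  simp at this

end LocalStartIn

section AcqStruct

variable {n : ℕ} {P Γ L : Type} {M : LDPN n P Γ L} {c₀ : Conf P Γ L} {r : GlobalRun M c₀}
  {q q₂ w : List Bool} {k k₂ m m₂ : ℕ} {l : L}

lemma InitRelAt.exists_root (h : InitRelAt r q k m l) : ∃ c, InTree r q c ∧ l ∈ c.2.2 := by
  obtain ⟨c, hc⟩ := h.1.exists_label?_of_prefix (prefix_locpos q m)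
  exact ⟨c, ⟨k, hc⟩, h.mem_locks (Nat.zero_le m) (by rw [locpos_zero]; exact ⟨k, hc⟩)⟩

lemma not_initRelAt_append_false (pre : List Bool) : ¬ InitRelAt r (pre ++ [false]) k m l := by
  intro h
  obtain ⟨c, hc, hl⟩ := h.exists_root
  simp [hc.locks_eq_empty] at hl

lemma LocalStartIn.eq_of_initRelAt (hq : LocalStartIn w q) (h : InitRelAt r q k m l) :
    q = w := by
  rcases hq with hq | ⟨-, pre, rfl⟩
  exacts [hq, absurd h (not_initRelAt_append_false pre)]

lemma FinAcqAt.of_locpos_eq (h : FinAcqAt r q k m l) (hpos : locpos q m = locpos q₂ m₂) :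
    FinAcqAt r q₂ k m₂ l := by
  refine ⟨hpos ▸ h.1, fun m' hm' hrel => h.2 (m + (m' - m₂)) (by omega) ?_⟩
  rwa [locpos_add, hpos, ← locpos_add, show m₂ + (m' - m₂) = m' by omega]

lemma FinAcqAt.time_eq (hf : FinAcqAt r q k m l) (hf₂ : FinAcqAt r q₂ k₂ m₂ l) : k = k₂ := by
  rcases lt_trichotomy k k₂ with hlt | heq | hlt
  · obtain ⟨j, -, hheld⟩ := hf.holds hlt
    exact absurd hheld (hf₂.1.not_holds_of_acq _)
  · exact heq
  · obtain ⟨j, -, hheld⟩ := hf₂.holds hlt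
    exact absurd hheld (hf.1.not_holds_of_acq _)

lemma UsageAt.lt_of_finAcqAt (hu : UsageAt r q₂ k₂ m₂ l) (hf : FinAcqAt r q k m l) :
    k₂ < k := by
  by_contra! hle
  rcases hle.eq_or_lt with rfl | hlt
  · rcases hu with ⟨hacq, hnf⟩ | ⟨hrel, -⟩
    · exact hnf (hf.of_locpos_eq (hf.1.pos_eq hacq))
    · exact hf.1.not_holds_of_acq _ hrel.holds_of_rel
  · obtain ⟨j, hj, hheld⟩ := hf.holds hlt
    rcases hu with ⟨hacq, -⟩ | ⟨hrel, -⟩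
    · exact hacq.not_holds_of_acq _ hheld
    · exact hf.2 j hj ⟨k₂, hrel.eq_of_rel_of_holds hheld ▸ hrel⟩

lemma UsageAt.lt_of_initRelAt (hq₂ : LocalStartIn w q₂) (hu : UsageAt r q₂ k₂ m₂ l)
    (hir : InitRelAt r w k m l) : k < k₂ := by
  by_contra! hle
  obtain ⟨a, hev⟩ : ∃ a, EventAt r k₂ (locpos q₂ m₂) a := by
    rcases hu with ⟨h, -⟩ | ⟨h, -⟩ <;> exact ⟨_, h⟩
  obtain ⟨c, hc⟩ := hev.exists_label?_of_prefix (hq₂.isPrefix.trans (prefix_locpos q₂ m₂))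
  obtain ⟨j, hj, hheld⟩ := hir.holds hc hle
  rcases hu with ⟨hacq, -⟩ | ⟨hrel, hni⟩
  · exact hacq.not_holds_of_acq _ hheld
  · obtain ⟨rfl, rfl⟩ := hq₂.locpos_inj (Or.inl rfl) (hrel.eq_of_rel_of_holds hheld)
    exact hni ⟨hrel, fun m' hm' => hir.2 m' (by omega)⟩

/-- The main local run of the right child holds the lock at every instant after the spawn. -/
lemma not_eventAt_of_mem_X_diff_R {v : List Bool}
    (hl : l ∈ (acqStructOf r (v ++ [true])).X \ (acqStructOf r (v ++ [true])).R) {b : Bool}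
    (hq : LocalStartIn (v ++ [b]) q) {a : Act L} (ha : a = .acq l ∨ a = .rel l) :
    ¬ EventAt r k (locpos q m) a := by
  intro hev
  obtain ⟨⟨c₁, hc₁, hl₁⟩, hnR⟩ := hl
  have hni : ∀ k m, ¬ InitRelAt r (v ++ [true]) k m l :=
    fun k m h => hnR ⟨_, k, m, Or.inl rfl, h⟩
  obtain ⟨d, hd⟩ := hev.exists_label?_of_prefix (hq.isPrefix.trans (prefix_locpos q m))
  obtain ⟨c, hc⟩ : ∃ c, (r.tr k).label? (v ++ [true]) = some c := by
    cases b
    exacts [r.exists_label?_sibling hd, ⟨d, hd⟩]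
  obtain ⟨j, hheld⟩ := holds_of_forall_not_initRelAt hc₁ hl₁ hni hc
  rcases ha with rfl | rfl
  · exact hev.not_holds_of_acq _ hheld
  · rw [hev.eq_of_rel_of_holds hheld] at hev
    obtain ⟨_, c', -, hc', hstep, -⟩ := hev.exists_leafAt
    rw [← locpos_succ] at hc'
    have := mem_locks_of_forall_not_initRelAt hc₁ hl₁ hni (j + 1) (inTree_of_leafAt hc')
    rw [hstep] at this
    exact this.2 rfl

variable (r)

lemma acqStructOf_X_append_false (pre : List Bool) : (acqStructOf r (pre ++ [false])).X = ∅ := by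
  refine Set.eq_empty_of_forall_notMem ?_
  rintro l ⟨c, hc, hl⟩
  simp [hc.locks_eq_empty] at hl

lemma acqStructOf_RH_append_false (pre : List Bool) :
    (acqStructOf r (pre ++ [false])).RH = ∅ := by
  refine Set.eq_empty_of_forall_notMem ?_
  rintro ⟨x, y⟩ ⟨q, k, m, hq, hir, -⟩
  exact not_initRelAt_append_false pre (hq.eq_of_initRelAt hir ▸ hir)

lemma relAcyclic_acqStructOf_RH (w : List Bool) : RelAcyclic (acqStructOf r w).RH := by
  refine RelAcyclic.of_forall_exists_lt (fun l t => ∃ m, InitRelAt r w t m l) ?_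
  rintro x y ⟨q, k, m, hq, hir, q₂, k₂, m₂, hq₂, hk₂, hu⟩
  obtain rfl := hq.eq_of_initRelAt hir
  exact ⟨k, ⟨m, hir⟩, fun s ⟨_, hirx⟩ => (hu.lt_of_initRelAt hq₂ hirx).trans hk₂⟩

lemma exists_finAcqAt_lt_of_mem_AH {w : List Bool} {x y : L}
    (h : (x, y) ∈ (acqStructOf r w).AH) :
    ∃ s, (∃ q m, FinAcqAt r q s m x) ∧ ∀ t, (∃ q m, FinAcqAt r q t m y) → s < t := by
  obtain ⟨q, k, m, -, hf, q₂, k₂, m₂, -, hk₂, hu⟩ := h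
  exact ⟨k, ⟨q, m, hf⟩, fun t ⟨_, _, hf'⟩ => hk₂.trans (hu.lt_of_finAcqAt hf')⟩

lemma relAcyclic_acqStructOf_AH_union (w w' : List Bool) :
    RelAcyclic ((acqStructOf r w).AH ∪ (acqStructOf r w').AH) :=
  RelAcyclic.of_forall_exists_lt' (fun l t => ∃ q m, FinAcqAt r q t m l) fun _ _ hxy =>
    hxy.elim (exists_finAcqAt_lt_of_mem_AH r) (exists_finAcqAt_lt_of_mem_AH r)

lemma disjoint_acqStructOf_A (v : List Bool) :
    Disjoint (acqStructOf r (v ++ [true])).A (acqStructOf r (v ++ [false])).A := by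
  rw [Set.disjoint_left]
  rintro l ⟨q, k, m, hq, hf⟩ ⟨q₂, k₂, m₂, hq₂, hf₂⟩
  obtain rfl := hf.time_eq hf₂
  exact hq.locpos_ne hq₂ (hf.1.pos_eq hf₂.1)

lemma disjoint_X_diff_R_U_union_A (v : List Bool) (b : Bool) :
    Disjoint ((acqStructOf r (v ++ [true])).X \ (acqStructOf r (v ++ [true])).R)
      ((acqStructOf r (v ++ [b])).U ∪ (acqStructOf r (v ++ [b])).A) := by
  rw [Set.disjoint_left]
  rintro l hl (⟨q, k, m, hq, ⟨hev, -⟩ | ⟨hev, -⟩⟩ | ⟨q, k, m, hq, hev, -⟩)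
  · exact not_eventAt_of_mem_X_diff_R hl hq (Or.inl rfl) hev
  · exact not_eventAt_of_mem_X_diff_R hl hq (Or.inr rfl) hev
  · exact not_eventAt_of_mem_X_diff_R hl hq (Or.inl rfl) hev

end AcqStruct

/-- **Compatibility at spawn nodes (Statement 12).**
Let `T` be a global run of an L-DPN that uses locks in a nested style, and let
`v` be a node of `T` having both a right child and a left child (a spawned
instance).  Then the acquisition structures `as¹` and `as²` of the subtrees of
`T` rooted at the right child and at the left child are consistent and
`Compatible(as¹, as²)` holds. -/
theorem spawn_children_compatible :
    ∀ (n : ℕ) (P Γ L : Type) (M : LDPN n P Γ L), M.WF →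
    ∀ (c₀ : Conf P Γ L) (r : GlobalRun M c₀), NestedRun r →
    ∀ v : List Bool,
      (∃ c, InTree r (v ++ [true]) c) → (∃ c, InTree r (v ++ [false]) c) →
      ASConsistent (acqStructOf r (v ++ [true])) ∧
      ASConsistent (acqStructOf r (v ++ [false])) ∧
      ASCompatible (acqStructOf r (v ++ [true])) (acqStructOf r (v ++ [false])) := by
  intro n P Γ L M _ c₀ r _ v _ _
  have hX := acqStructOf_X_append_false r v
  have hRH : RelAcyclic
      ((acqStructOf r (v ++ [true])).RH ∪ (acqStructOf r (v ++ [false])).RH) := by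
    rw [acqStructOf_RH_append_false, Set.union_empty]
    exact relAcyclic_acqStructOf_RH r _
  have hAH := relAcyclic_acqStructOf_AH_union r (v ++ [true]) (v ++ [false])
  have hUA := disjoint_X_diff_R_U_union_A r v
  refine ⟨⟨hRH.mono Set.subset_union_left, hAH.mono Set.subset_union_left, (hUA true).inter_eq⟩,
    ⟨relAcyclic_acqStructOf_RH r _, hAH.mono Set.subset_union_right, by simp [hX]⟩,
    by simp [hX], ?_, hRH, hAH, by simp [hX], ?_⟩
  · rw [hX, Set.empty_sdiff, Set.union_empty]
    exact (Set.disjoint_union_left.mpr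
      ⟨disjoint_acqStructOf_A r v, (hUA false).mono_right Set.subset_union_right⟩).inter_eq
  · rw [Set.union_comm]
    exact (hUA false).symm.inter_eq

end DPNFormal
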